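/- Let G' be a finite directed graph with nonnegative edge weights containing a directed path P₂ of total length 0 and a sequence P₁ of distinct vertices disjoint from P₂ equipped with a linear order ≤_{P₁}, such that no vertex of P₁ has an outgoing edge in G' and every edge of G' whose head lies on P₂ is an edge of P₂. Assume the crossing hypothesis: whenever W is a walk in G' from a vertex b of P₂ to a vertex p of P₁ and W' is a walk in G' from a vertex b' of P₂ to a vertex p' of P₁ with b' <_{P₂} b and p' <_{P₁} p, the walks W and W' share a vertex. Let β > 0 and ε > 0. Then there exist sequences b₁ <_{P₂} b₂ <_{P₂} … <_{P₂} b_t of vertices of P₂ and v₁, …, v_t of vertices of P₁, with t ≤ 1/ε + 1, such that: (1) for every vertex b of P₂ for which dfirst_{G'}(b,P₁,β) exists, the set {i : b ≤_{P₂} b_i} is nonempty, and the ≤_{P₁}-least element v of {v_i : b ≤_{P₂} b_i} satisfies v ≤_{P₁} dfirst_{G'}(b,P₁,β) and some walk in G' from b to v has length at most (1+ε)β; and (2) for every vertex b of P₂ with b_t <_{P₂} b, no walk in G' of length at most β leads from b to a vertex of P₁. -/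

import Mathlib

/-!
Cut `P₂` greedily into blocks: a block starts at a vertex `a`, its target is
`v = dfirst(a, P₁, β)`, and it ends at the last vertex `b` of `P₂` that still reaches `v` within
`(1 + ε) β`; the next block starts right after `b`. As `P₂` has length `0`, moving backwards
along `P₂` only makes reaching easier, which gives the covering property and makes the targets
increase along `P₁`.

To bound the number of blocks, let a walk go from beyond the end of block `i` to beyond its
target. It crosses the walk `a i ⇝ v i` of length `≤ β`; exchanging tails shows it is longer by
more than `εβ` than the shortest walk from `a i` to the same endpoint, so by induction its length
is at least `(i + 1) εβ`. Applied to the walk `a (t-1) ⇝ v (t-1)`, this gives `(t - 1) εβ ≤ β`.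
-/

/-- A walk in the directed graph with edge relation `E`: a nonempty list of vertices
starting at `u`, ending at `v`, with every consecutive pair an edge. -/
def IsWalk {V : Type*} (E : V → V → Prop) (l : List V) (u v : V) : Prop :=
  l ≠ [] ∧ l.head? = some u ∧ l.getLast? = some v ∧ l.Chain' E

/-- The length of a walk: the sum of the weights of its consecutive pairs. -/
def walkLen {V : Type*} (w : V → V → ℝ) (l : List V) : ℝ :=
  ((l.zip l.tail).map fun q => w q.1 q.2).sum

/-- `b` is `dfirst_G(v,Q,β)`: the `≤_Q`-least vertex of the ordered vertex list `q`
reachable from `v` by a walk of length at most `β`. -/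
def IsDFirst {V : Type*} [DecidableEq V] (E : V → V → Prop) (w : V → V → ℝ)
    (v : V) (q : List V) (β : ℝ) (b : V) : Prop :=
  b ∈ q ∧ (∃ l, IsWalk E l v b ∧ walkLen w l ≤ β) ∧
    ∀ c ∈ q, (∃ l, IsWalk E l v c ∧ walkLen w l ≤ β) → q.idxOf b ≤ q.idxOf c

section

variable {V : Type*} {E : V → V → Prop} {w : V → V → ℝ}

section Walks

@[simp] theorem walkLen_singleton (a : V) : walkLen w [a] = 0 := by simp [walkLen]

@[simp] theorem walkLen_cons_cons (a b : V) (l : List V) :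
    walkLen w (a :: b :: l) = w a b + walkLen w (b :: l) := by
  simp [walkLen]

theorem walkLen_nonneg (hw : ∀ x y, 0 ≤ w x y) (l : List V) : 0 ≤ walkLen w l :=
  List.sum_nonneg fun _ hx => by
    obtain ⟨q, -, rfl⟩ := List.mem_map.1 hx
    exact hw _ _

theorem walkLen_append_cons (l₁ : List V) (a : V) (l₂ : List V) :
    walkLen w (l₁ ++ a :: l₂) = walkLen w (l₁ ++ [a]) + walkLen w (a :: l₂) := by
  induction l₁ with
  | nil => simp
  | cons x l₁ ih =>
    cases l₁ with
    | nil => simp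
    | cons y l₁ =>
      simp only [List.cons_append, walkLen_cons_cons] at ih ⊢
      rw [ih]; ring

theorem isWalk_append_cons_iff {l₁ l₂ : List V} {a u v : V} :
    IsWalk E (l₁ ++ a :: l₂) u v ↔ IsWalk E (l₁ ++ [a]) u a ∧ IsWalk E (a :: l₂) a v := by
  have hhead : (l₁ ++ a :: l₂).head? = (l₁ ++ [a]).head? := by simp [List.head?_append]
  unfold IsWalk
  rw [hhead, List.getLast?_append_cons, List.Chain', List.Chain', List.Chain', List.isChain_split]
  simp only [ne_eq, List.append_eq_nil_iff, reduceCtorEq, and_false, not_false_eq_true,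
    List.getLast?_append_cons, List.getLast?_singleton, List.head?_cons, true_and]
  tauto

theorem IsWalk.eq_dropLast_append {l : List V} {u v : V} (h : IsWalk E l u v) :
    l = l.dropLast ++ [v] :=
  (List.dropLast_append_getLast? v h.2.2.1).symm

theorem IsWalk.eq_cons_tail {l : List V} {u v : V} (h : IsWalk E l u v) : l = u :: l.tail :=
  (List.cons_head?_tail h.2.1).symm

variable (E w) in
def ReachWithin (γ : ℝ) (x y : V) : Prop := ∃ l, IsWalk E l x y ∧ walkLen w l ≤ γ

theorem ReachWithin.mono {γ γ' : ℝ} {x y : V} (h : ReachWithin E w γ x y) (hγ : γ ≤ γ') :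
    ReachWithin E w γ' x y :=
  let ⟨l, hl, hlen⟩ := h; ⟨l, hl, hlen.trans hγ⟩

theorem ReachWithin.nonneg (hw : ∀ x y, 0 ≤ w x y) {γ : ℝ} {x y : V}
    (h : ReachWithin E w γ x y) : 0 ≤ γ :=
  let ⟨l, _, hl⟩ := h; (walkLen_nonneg hw l).trans hl

theorem reachWithin_refl {γ : ℝ} (hγ : 0 ≤ γ) (x : V) : ReachWithin E w γ x x :=
  ⟨[x], ⟨by simp, rfl, rfl, List.isChain_singleton x⟩, by simpa using hγ⟩

theorem reachWithin_of_rel {x y : V} (h : E x y) : ReachWithin E w (w x y) x y :=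
  ⟨[x, y], ⟨by simp, rfl, rfl, List.isChain_pair.2 h⟩, by simp⟩

theorem ReachWithin.trans {γ₁ γ₂ : ℝ} {x y z : V} (h₁ : ReachWithin E w γ₁ x y)
    (h₂ : ReachWithin E w γ₂ y z) : ReachWithin E w (γ₁ + γ₂) x z := by
  obtain ⟨l₁, hl₁, hlen₁⟩ := h₁
  obtain ⟨l₂, hl₂, hlen₂⟩ := h₂
  have e₁ := hl₁.eq_dropLast_append
  have e₂ := hl₂.eq_cons_tail
  rw [e₁] at hl₁ hlen₁
  rw [e₂] at hl₂ hlen₂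
  refine ⟨l₁.dropLast ++ y :: l₂.tail, isWalk_append_cons_iff.2 ⟨hl₁, hl₂⟩, ?_⟩
  rw [walkLen_append_cons]
  linarith

theorem IsWalk.exists_split {C : List V} {u v z : V} (hC : IsWalk E C u v) (hz : z ∈ C) :
    ∃ γ₁ γ₂, γ₁ + γ₂ = walkLen w C ∧ ReachWithin E w γ₁ u z ∧ ReachWithin E w γ₂ z v := by
  obtain ⟨s, t, rfl⟩ := List.append_of_mem hz
  obtain ⟨h₁, h₂⟩ := isWalk_append_cons_iff.1 hC
  exact ⟨_, _, (walkLen_append_cons s z t).symm, ⟨_, h₁, le_rfl⟩, ⟨_, h₂, le_rfl⟩⟩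

/-- Exchanging the tails of `b ⇝ q` and `a ⇝ v` at a common vertex `z` gives walks `b ⇝ v` and
`a ⇝ q` of the same total length. -/
theorem lt_walkLen_add_walkLen_of_mem_of_mem {C L : List V} {a b q v z : V} {γ A : ℝ}
    (hC : IsWalk E C b q) (hL : IsWalk E L a v) (hzC : z ∈ C) (hzL : z ∈ L)
    (hbv : ¬ ReachWithin E w γ b v) (haq : ∀ δ, ReachWithin E w δ a q → A ≤ δ) :
    γ + A < walkLen w C + walkLen w L := by
  obtain ⟨c₁, c₂, hc, hbz, hzq⟩ := hC.exists_split (w := w) hzC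
  obtain ⟨l₁, l₂, hl, haz, hzv⟩ := hL.exists_split (w := w) hzL
  have hbv' : γ < c₁ + l₂ := not_le.1 fun h => hbv ((hbz.trans hzv).mono h)
  have haq' : A ≤ l₁ + c₂ := haq _ (haz.trans hzq)
  linarith

theorem reachWithin_getElem_of_isChain (hw : ∀ x y, 0 ≤ w x y) {l : List V} (hl : l.IsChain E)
    {i j : ℕ} (hij : i ≤ j) (hj : j < l.length) : ReachWithin E w (walkLen w l) l[i] l[j] := by
  induction l generalizing i j with
  | nil => simp at hj
  | cons a l ih =>
    match l, i, j, hl, hij, hj with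
    | l, 0, 0, _, _, _ => exact reachWithin_refl (walkLen_nonneg hw _) a
    | [], _, _ + 1, _, _, hj => simp at hj
    | b :: l, 0, j + 1, hl, _, hj =>
      rw [List.isChain_cons_cons] at hl
      rw [walkLen_cons_cons]
      exact (reachWithin_of_rel hl.1).trans (ih hl.2 (Nat.zero_le j) (by simpa using hj))
    | b :: l, i + 1, j + 1, hl, hij, hj =>
      rw [List.isChain_cons_cons] at hl
      exact (ih hl.2 (by omega) (by simpa using hj)).mono (by simp [hw])

end Walks

section DFirst
variable [DecidableEq V] {p₁ : List V} {β : ℝ} {x b : V}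

theorem IsDFirst.mem (h : IsDFirst E w x p₁ β b) : b ∈ p₁ := h.1

theorem IsDFirst.reachWithin (h : IsDFirst E w x p₁ β b) : ReachWithin E w β x b := h.2.1

theorem IsDFirst.idxOf_le (h : IsDFirst E w x p₁ β b) {c : V} (hc : c ∈ p₁)
    (hxc : ReachWithin E w β x c) : p₁.idxOf b ≤ p₁.idxOf c :=
  h.2.2 c hc hxc

theorem exists_isDFirst (h : ∃ c ∈ p₁, ReachWithin E w β x c) : ∃ b, IsDFirst E w x p₁ β b := by
  classical
  obtain ⟨b, hb, hmin⟩ := Finset.exists_min_image {c ∈ p₁.toFinset | ReachWithin E w β x c}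
    p₁.idxOf (by obtain ⟨c, hc, hxc⟩ := h; exact ⟨c, by simp [hc, hxc]⟩)
  simp only [Finset.mem_filter, List.mem_toFinset] at hb hmin
  exact ⟨b, hb.1, hb.2, fun c hc hxc => hmin c ⟨hc, hxc⟩⟩

end DFirst

section Path
variable [DecidableEq V] {p₂ : List V}

theorem reachWithin_zero_of_idxOf_le (hw : ∀ x y, 0 ≤ w x y) (hch : p₂.IsChain E)
    (hlen : walkLen w p₂ = 0) {x y : V} (hy : y ∈ p₂) (hxy : p₂.idxOf x ≤ p₂.idxOf y) :
    ReachWithin E w 0 x y := by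
  have hy' := List.idxOf_lt_length_iff.2 hy
  have hx' : p₂.idxOf x < p₂.length := hxy.trans_lt hy'
  simpa only [hlen, List.getElem_idxOf] using reachWithin_getElem_of_isChain hw hch hxy hy'

theorem ReachWithin.of_idxOf_le (hw : ∀ x y, 0 ≤ w x y) (hch : p₂.IsChain E)
    (hlen : walkLen w p₂ = 0) {γ : ℝ} {x y c : V} (hy : y ∈ p₂)
    (hxy : p₂.idxOf x ≤ p₂.idxOf y) (h : ReachWithin E w γ y c) : ReachWithin E w γ x c := by
  simpa using (reachWithin_zero_of_idxOf_le hw hch hlen hy hxy).trans h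

end Path

variable (E w) in
/-- Block `i` of a greedy decomposition of `p₂` runs from `a i` to `b i` and has target `v i`. -/
structure IsGreedyBlocks [DecidableEq V] (p₂ p₁ : List V) (β ε : ℝ) (t : ℕ) (a b v : ℕ → V) :
    Prop where
  start_mem : ∀ i < t, a i ∈ p₂
  end_mem : ∀ i < t, b i ∈ p₂
  isDFirst : ∀ i < t, IsDFirst E w (a i) p₁ β (v i)
  reachWithin_end : ∀ i < t, ReachWithin E w ((1 + ε) * β) (b i) (v i)
  idxOf_le_end : ∀ i < t, ∀ x ∈ p₂, ReachWithin E w ((1 + ε) * β) x (v i) →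
    p₂.idxOf x ≤ p₂.idxOf (b i)
  idxOf_start_zero : 0 < t → p₂.idxOf (a 0) = 0
  idxOf_start_succ : ∀ i, i + 1 < t → p₂.idxOf (a (i + 1)) = p₂.idxOf (b i) + 1
  not_reachWithin : ∀ x ∈ p₂, (∀ i < t, p₂.idxOf (b i) < p₂.idxOf x) →
    ∀ c ∈ p₁, ¬ ReachWithin E w β x c

theorem lt_of_forall_lt_add_one {f : ℕ → ℕ} {t : ℕ} (h : ∀ i, i + 1 < t → f i < f (i + 1))
    {i j : ℕ} (hij : i < j) (hj : j < t) : f i < f j := by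
  induction j with
  | zero => omega
  | succ k ih =>
    obtain rfl | hik := eq_or_lt_of_le (Nat.le_of_lt_succ hij)
    · exact h i hj
    · exact (ih hik (by omega)).trans (h k hj)

namespace IsGreedyBlocks

variable [DecidableEq V] {p₂ p₁ : List V} {β ε : ℝ} {t : ℕ} {a b v : ℕ → V}

theorem idxOf_start_le_end (hG : IsGreedyBlocks E w p₂ p₁ β ε t a b v) (hβ : 0 ≤ β)
    (hε : 0 ≤ ε) {i : ℕ} (hi : i < t) : p₂.idxOf (a i) ≤ p₂.idxOf (b i) :=
  hG.idxOf_le_end i hi _ (hG.start_mem i hi) ((hG.isDFirst i hi).reachWithin.mono (by nlinarith))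

theorem idxOf_end_lt_start_succ (hG : IsGreedyBlocks E w p₂ p₁ β ε t a b v) {i : ℕ}
    (hi : i + 1 < t) : p₂.idxOf (b i) < p₂.idxOf (a (i + 1)) := by
  rw [hG.idxOf_start_succ i hi]
  exact Nat.lt_succ_self _

theorem idxOf_end_lt (hG : IsGreedyBlocks E w p₂ p₁ β ε t a b v) (hβ : 0 ≤ β) (hε : 0 ≤ ε)
    {i j : ℕ} (hij : i < j) (hj : j < t) : p₂.idxOf (b i) < p₂.idxOf (b j) :=
  lt_of_forall_lt_add_one (fun _ hk =>
    (hG.idxOf_end_lt_start_succ hk).trans_le (hG.idxOf_start_le_end hβ hε hk)) hij hj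

/-- `v (i + 1)` is reached within `β` from `a (i + 1)`, hence from `a i`, and differs from `v i`
because `a (i + 1)` lies beyond `b i`. -/
theorem idxOf_target_lt_succ (hG : IsGreedyBlocks E w p₂ p₁ β ε t a b v)
    (hw : ∀ x y, 0 ≤ w x y) (hch : p₂.IsChain E) (hlen : walkLen w p₂ = 0) (hβ : 0 ≤ β)
    (hε : 0 ≤ ε) {i : ℕ} (hi : i + 1 < t) : p₁.idxOf (v i) < p₁.idxOf (v (i + 1)) := by
  have hv := hG.isDFirst (i + 1) hi
  have hab := hG.idxOf_start_le_end hβ hε (i := i) (by omega)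
  have hba := hG.idxOf_end_lt_start_succ hi
  have hle : p₁.idxOf (v i) ≤ p₁.idxOf (v (i + 1)) :=
    (hG.isDFirst i (by omega)).idxOf_le hv.mem
      (hv.reachWithin.of_idxOf_le hw hch hlen (hG.start_mem _ hi) (by omega))
  refine lt_of_le_of_ne hle fun heq => ?_
  rw [List.idxOf_inj (hG.isDFirst i (by omega)).mem] at heq
  have := hG.idxOf_le_end i (by omega) _ (hG.start_mem _ hi)
    (heq ▸ hv.reachWithin.mono (by nlinarith))
  omega

theorem idxOf_target_le (hG : IsGreedyBlocks E w p₂ p₁ β ε t a b v)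
    (hw : ∀ x y, 0 ≤ w x y) (hch : p₂.IsChain E) (hlen : walkLen w p₂ = 0) (hβ : 0 ≤ β)
    (hε : 0 ≤ ε) {i j : ℕ} (hij : i ≤ j) (hj : j < t) : p₁.idxOf (v i) ≤ p₁.idxOf (v j) := by
  obtain rfl | hij := eq_or_lt_of_le hij
  · exact le_rfl
  · exact (lt_of_forall_lt_add_one
      (fun k hk => hG.idxOf_target_lt_succ hw hch hlen hβ hε (i := k) hk) hij hj).le

end IsGreedyBlocks

variable (E) in
def WalksCross [DecidableEq V] (p₂ p₁ : List V) : Prop :=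
  ∀ (lw lw' : List V) (b q b' q' : V), b ∈ p₂ → q ∈ p₁ → b' ∈ p₂ → q' ∈ p₁ →
    IsWalk E lw b q → IsWalk E lw' b' q' →
    p₂.idxOf b' < p₂.idxOf b → p₁.idxOf q' < p₁.idxOf q → ∃ x, x ∈ lw ∧ x ∈ lw'

namespace IsGreedyBlocks

variable [DecidableEq V] {p₂ p₁ : List V} {β ε : ℝ} {t : ℕ} {a b v : ℕ → V}

/-- The walk `x ⇝ q` crosses `a i ⇝ v i`; after exchanging tails, `x ⇝ v i` costs more than
`(1 + ε) β` because `x` lies beyond `b i`. -/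
theorem add_lt_of_reachWithin (hG : IsGreedyBlocks E w p₂ p₁ β ε t a b v)
    (hcross : WalksCross E p₂ p₁) (hβ : 0 ≤ β) (hε : 0 ≤ ε) {i : ℕ} (hi : i < t)
    {x q : V} {A δ : ℝ} (hx : x ∈ p₂) (hbx : p₂.idxOf (b i) < p₂.idxOf x) (hq : q ∈ p₁)
    (hvq : p₁.idxOf (v i) < p₁.idxOf q) (hA : ∀ δ', ReachWithin E w δ' (a i) q → A ≤ δ')
    (h : ReachWithin E w δ x q) : A + ε * β < δ := by
  obtain ⟨C, hC, hCδ⟩ := h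
  obtain ⟨L, hL, hLβ⟩ := (hG.isDFirst i hi).reachWithin
  have hax := (hG.idxOf_start_le_end hβ hε hi).trans_lt hbx
  obtain ⟨z, hzC, hzL⟩ := hcross C L x q (a i) (v i) hx hq (hG.start_mem i hi)
    (hG.isDFirst i hi).mem hC hL hax hvq
  have hxv : ¬ ReachWithin E w ((1 + ε) * β) x (v i) := fun h =>
    (hG.idxOf_le_end i hi x hx h).not_gt hbx
  have := lt_walkLen_add_walkLen_of_mem_of_mem hC hL hzC hzL hxv hA
  linarith

theorem mul_le_of_reachWithin (hG : IsGreedyBlocks E w p₂ p₁ β ε t a b v)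
    (hw : ∀ x y, 0 ≤ w x y) (hch : p₂.IsChain E) (hlen : walkLen w p₂ = 0)
    (hcross : WalksCross E p₂ p₁) (hβ : 0 ≤ β) (hε : 0 ≤ ε) {i : ℕ} (hi : i < t)
    {x q : V} {δ : ℝ} (hx : x ∈ p₂) (hbx : p₂.idxOf (b i) < p₂.idxOf x) (hq : q ∈ p₁)
    (hvq : p₁.idxOf (v i) < p₁.idxOf q) (h : ReachWithin E w δ x q) :
    (i + 1) * (ε * β) ≤ δ := by
  induction i generalizing x q δ with
  | zero =>
    have := hG.add_lt_of_reachWithin hcross hβ hε hi hx hbx hq hvq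
      (fun _ h' => h'.nonneg hw) h
    push_cast
    linarith
  | succ k ih =>
    have := hG.add_lt_of_reachWithin hcross hβ hε hi hx hbx hq hvq (fun _ h' =>
      ih (by omega) (hG.start_mem _ hi) (hG.idxOf_end_lt_start_succ hi) hq
        ((hG.idxOf_target_lt_succ hw hch hlen hβ hε hi).trans hvq) h') h
    push_cast
    linarith

theorem card_le (hG : IsGreedyBlocks E w p₂ p₁ β ε t a b v)
    (hw : ∀ x y, 0 ≤ w x y) (hch : p₂.IsChain E) (hlen : walkLen w p₂ = 0)
    (hcross : WalksCross E p₂ p₁) (hβ : 0 < β) (hε : 0 < ε) : (t : ℝ) ≤ 1 / ε + 1 := by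
  obtain ht | ⟨k, rfl⟩ : t ≤ 1 ∨ ∃ k, t = k + 2 := by
    rcases Nat.lt_or_ge t 2 with h | h
    · exact .inl (by omega)
    · exact .inr ⟨t - 2, by omega⟩
  · have : (t : ℝ) ≤ 1 := by exact_mod_cast ht
    have : 0 < 1 / ε := by positivity
    linarith
  · have hk := hG.mul_le_of_reachWithin hw hch hlen hcross hβ.le hε.le (i := k) (by omega)
      (hG.start_mem _ (by omega)) (hG.idxOf_end_lt_start_succ (by omega))
      (hG.isDFirst (k + 1) (by omega)).mem
      (hG.idxOf_target_lt_succ hw hch hlen hβ.le hε.le (by omega))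
      (hG.isDFirst (k + 1) (by omega)).reachWithin
    have : ((k : ℝ) + 1) * ε ≤ 1 := by nlinarith
    rw [div_add_one hε.ne', le_div_iff₀ hε]
    push_cast
    linarith

theorem exists_block (hG : IsGreedyBlocks E w p₂ p₁ β ε t a b v) {x c : V} (hx : x ∈ p₂)
    (hc : c ∈ p₁) (hxc : ReachWithin E w β x c) :
    ∃ i < t, p₂.idxOf (a i) ≤ p₂.idxOf x ∧ p₂.idxOf x ≤ p₂.idxOf (b i) ∧
      ∀ j < t, p₂.idxOf x ≤ p₂.idxOf (b j) → i ≤ j := by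
  classical
  have hex : ∃ i, i < t ∧ p₂.idxOf x ≤ p₂.idxOf (b i) := by
    by_contra! hne
    exact hG.not_reachWithin x hx hne c hc hxc
  obtain ⟨hi, hxb⟩ := Nat.find_spec hex
  refine ⟨Nat.find hex, hi, ?_, hxb, fun j hj hxj => Nat.find_min' hex ⟨hj, hxj⟩⟩
  rcases h : Nat.find hex with _ | k
  · rw [hG.idxOf_start_zero (by omega)]
    exact Nat.zero_le _
  · have hbk : p₂.idxOf (b k) < p₂.idxOf x :=
      not_le.1 fun hxk => Nat.find_min hex (show k < Nat.find hex by omega) ⟨by omega, hxk⟩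
    rw [hG.idxOf_start_succ k (by omega)]
    omega

theorem exists_covering_block (hG : IsGreedyBlocks E w p₂ p₁ β ε t a b v)
    (hw : ∀ x y, 0 ≤ w x y) (hch : p₂.IsChain E) (hlen : walkLen w p₂ = 0) (hβ : 0 ≤ β)
    (hε : 0 ≤ ε) {x bf : V} (hx : x ∈ p₂) (hbf : IsDFirst E w x p₁ β bf) :
    ∃ i < t, p₂.idxOf x ≤ p₂.idxOf (b i) ∧
      (∀ j < t, p₂.idxOf x ≤ p₂.idxOf (b j) → p₁.idxOf (v i) ≤ p₁.idxOf (v j)) ∧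
      p₁.idxOf (v i) ≤ p₁.idxOf bf ∧ ReachWithin E w ((1 + ε) * β) x (v i) := by
  obtain ⟨i, hi, hax, hxb, hmin⟩ := hG.exists_block hx hbf.mem hbf.reachWithin
  refine ⟨i, hi, hxb, fun j hj hxj => hG.idxOf_target_le hw hch hlen hβ hε (hmin j hj hxj) hj,
    (hG.isDFirst i hi).idxOf_le hbf.mem
      (hbf.reachWithin.of_idxOf_le hw hch hlen hx hax), ?_⟩
  simpa using (reachWithin_zero_of_idxOf_le hw hch hlen (hG.end_mem i hi) hxb).trans
    (hG.reachWithin_end i hi)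

end IsGreedyBlocks

section Construction

variable [Inhabited V] {p₂ p₁ : List V} {β ε γ : ℝ}

theorem List.getElem!_mem {l : List V} {j : ℕ} (hj : j < l.length) : l[j]! ∈ l := by
  rw [getElem!_pos l j hj]
  exact List.getElem_mem hj

variable (E w) in
open Classical in
-- junk value `0` when no vertex of `p₂` reaches `v` within `γ`
noncomputable def lastReacher (p₂ : List V) (γ : ℝ) (v : V) : ℕ :=
  Nat.findGreatest (fun j => j < p₂.length ∧ ReachWithin E w γ p₂[j]! v) p₂.length

open Classical in
theorem le_lastReacher {v : V} {j : ℕ} (hj : j < p₂.length) (h : ReachWithin E w γ p₂[j]! v) :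
    j ≤ lastReacher E w p₂ γ v :=
  Nat.le_findGreatest hj.le ⟨hj, h⟩

open Classical in
theorem lastReacher_spec {v : V} {j : ℕ} (hj : j < p₂.length)
    (h : ReachWithin E w γ p₂[j]! v) :
    lastReacher E w p₂ γ v < p₂.length ∧ ReachWithin E w γ p₂[lastReacher E w p₂ γ v]! v :=
  Nat.findGreatest_spec (P := fun j => j < p₂.length ∧ ReachWithin E w γ p₂[j]! v) hj.le ⟨hj, h⟩

variable (E w) in
def ReachesFrom (p₂ p₁ : List V) (β : ℝ) (j : ℕ) : Prop :=
  j < p₂.length ∧ ∃ c ∈ p₁, ReachWithin E w β p₂[j]! c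

variable [DecidableEq V]

theorem List.idxOf_getElem! {l : List V} (hl : l.Nodup) {j : ℕ} (hj : j < l.length) :
    l.idxOf l[j]! = j := by
  rw [getElem!_pos l j hj]
  exact hl.idxOf_getElem j hj

theorem List.getElem!_idxOf {l : List V} {x : V} (hx : x ∈ l) : l[l.idxOf x]! = x := by
  rw [getElem!_pos l _ (List.idxOf_lt_length_iff.2 hx)]
  exact List.getElem_idxOf _

variable (E w) in
noncomputable def dfirst (p₁ : List V) (β : ℝ) (x : V) : V :=
  Classical.epsilon (IsDFirst E w x p₁ β)

theorem isDFirst_dfirst {x : V} (h : ∃ c ∈ p₁, ReachWithin E w β x c) :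
    IsDFirst E w x p₁ β (dfirst E w p₁ β x) :=
  Classical.epsilon_spec (exists_isDFirst h)

variable (E w) in
noncomputable def blockTarget (p₂ p₁ : List V) (β : ℝ) (s : ℕ) : V := dfirst E w p₁ β p₂[s]!

variable (E w) in
noncomputable def blockEnd (p₂ p₁ : List V) (β ε : ℝ) (s : ℕ) : ℕ :=
  lastReacher E w p₂ ((1 + ε) * β) (blockTarget E w p₂ p₁ β s)

variable (E w) in
noncomputable def blockStart (p₂ p₁ : List V) (β ε : ℝ) (i : ℕ) : ℕ :=
  (fun s => blockEnd E w p₂ p₁ β ε s + 1)^[i] 0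

theorem blockStart_succ (i : ℕ) :
    blockStart E w p₂ p₁ β ε (i + 1) = blockEnd E w p₂ p₁ β ε (blockStart E w p₂ p₁ β ε i) + 1 :=
  Function.iterate_succ_apply' _ i 0

theorem isDFirst_blockTarget {s : ℕ} (hs : ReachesFrom E w p₂ p₁ β s) :
    IsDFirst E w p₂[s]! p₁ β (blockTarget E w p₂ p₁ β s) :=
  isDFirst_dfirst hs.2

theorem blockEnd_spec (hβ : 0 ≤ β) (hε : 0 ≤ ε) {s : ℕ} (hs : ReachesFrom E w p₂ p₁ β s) :
    s ≤ blockEnd E w p₂ p₁ β ε s ∧ blockEnd E w p₂ p₁ β ε s < p₂.length ∧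
      ReachWithin E w ((1 + ε) * β) p₂[blockEnd E w p₂ p₁ β ε s]! (blockTarget E w p₂ p₁ β s) := by
  have h := (isDFirst_blockTarget hs).reachWithin.mono (show β ≤ (1 + ε) * β by nlinarith)
  exact ⟨le_lastReacher hs.1 h, lastReacher_spec hs.1 h⟩

theorem exists_not_reachesFrom_blockStart (hβ : 0 ≤ β) (hε : 0 ≤ ε) :
    ∃ i, ¬ ReachesFrom E w p₂ p₁ β (blockStart E w p₂ p₁ β ε i) := by
  by_contra! hall
  have hgrow : ∀ i, i ≤ blockStart E w p₂ p₁ β ε i := by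
    intro i
    induction i with
    | zero => exact le_rfl
    | succ k ih =>
      rw [blockStart_succ]
      have := (blockEnd_spec hβ hε (hall k)).1
      omega
  exact (hgrow p₂.length).not_gt (hall p₂.length).1

theorem exists_isGreedyBlocks (hw : ∀ x y, 0 ≤ w x y) (hnd : p₂.Nodup) (hch : p₂.IsChain E)
    (hlen : walkLen w p₂ = 0) (hβ : 0 ≤ β) (hε : 0 ≤ ε) :
    ∃ t a b v, IsGreedyBlocks E w p₂ p₁ β ε t a b v := by
  classical
  set s := blockStart E w p₂ p₁ β ε
  set B := fun i => blockEnd E w p₂ p₁ β ε (s i)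
  have hex := exists_not_reachesFrom_blockStart (E := E) (w := w) (p₂ := p₂) (p₁ := p₁) hβ hε
  have hs_succ : ∀ i, s (i + 1) = B i + 1 := blockStart_succ
  set t := Nat.find hex
  have hlive : ∀ i < t, ReachesFrom E w p₂ p₁ β (s i) := fun i hi => not_not.1 (Nat.find_min hex hi)
  have hB : ∀ i < t, B i < p₂.length := fun i hi => (blockEnd_spec hβ hε (hlive i hi)).2.1
  refine ⟨t, fun i => p₂[s i]!, fun i => p₂[B i]!, fun i => blockTarget E w p₂ p₁ β (s i),
    fun i hi => List.getElem!_mem (hlive i hi).1, fun i hi => List.getElem!_mem (hB i hi),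
    fun i hi => isDFirst_blockTarget (hlive i hi),
    fun i hi => (blockEnd_spec hβ hε (hlive i hi)).2.2, ?_, ?_, ?_, ?_⟩
  · intro i hi x hx hxv
    rw [List.idxOf_getElem! hnd (hB i hi)]
    rw [← List.getElem!_idxOf hx] at hxv
    exact le_lastReacher (List.idxOf_lt_length_iff.2 hx) hxv
  · intro ht
    exact List.idxOf_getElem! hnd (hlive 0 ht).1
  · intro i hi
    rw [List.idxOf_getElem! hnd (hlive _ hi).1, List.idxOf_getElem! hnd (hB i (by omega))]
    exact hs_succ i
  · intro x hx hbx c hc hxc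
    have hsx : s t ≤ p₂.idxOf x := by
      rcases ht : t with _ | k
      · exact Nat.zero_le _
      · have := hbx k (by omega)
        rw [hs_succ]
        rwa [List.idxOf_getElem! hnd (hB k (by omega))] at this
    refine Nat.find_spec hex ⟨hsx.trans_lt (List.idxOf_lt_length_iff.2 hx), c, hc, ?_⟩
    refine hxc.of_idxOf_le hw hch hlen hx ?_
    rwa [List.idxOf_getElem! hnd (hsx.trans_lt (List.idxOf_lt_length_iff.2 hx))]

end Construction

end

theorem stmt_9_general {V : Type*} [DecidableEq V] (E : V → V → Prop)
    (w : V → V → ℝ) (hw : ∀ x y, 0 ≤ w x y)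
    (p₂ p₁ : List V) (hp₂nd : p₂.Nodup) (hp₂ch : p₂.Chain' E)
    (hp₂len : walkLen w p₂ = 0)
    (hcross : ∀ (lw lw' : List V) (b q b' q' : V),
      b ∈ p₂ → q ∈ p₁ → b' ∈ p₂ → q' ∈ p₁ →
      IsWalk E lw b q → IsWalk E lw' b' q' →
      p₂.idxOf b' < p₂.idxOf b → p₁.idxOf q' < p₁.idxOf q →
      ∃ x, x ∈ lw ∧ x ∈ lw')
    (β ε : ℝ) (hβ : 0 < β) (hε : 0 < ε) :
    ∃ (t : ℕ) (b v : Fin t → V), (t : ℝ) ≤ 1 / ε + 1 ∧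
      (∀ i, b i ∈ p₂) ∧ (∀ i, v i ∈ p₁) ∧
      (∀ i j : Fin t, i < j → p₂.idxOf (b i) < p₂.idxOf (b j)) ∧
      (∀ x bf, x ∈ p₂ → IsDFirst E w x p₁ β bf →
        ∃ i : Fin t, p₂.idxOf x ≤ p₂.idxOf (b i) ∧
          (∀ j : Fin t, p₂.idxOf x ≤ p₂.idxOf (b j) →
            p₁.idxOf (v i) ≤ p₁.idxOf (v j)) ∧
          p₁.idxOf (v i) ≤ p₁.idxOf bf ∧
          ∃ l, IsWalk E l x (v i) ∧ walkLen w l ≤ (1 + ε) * β) ∧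
      (∀ x ∈ p₂, (∀ i : Fin t, p₂.idxOf (b i) < p₂.idxOf x) →
        ¬ ∃ l c, c ∈ p₁ ∧ IsWalk E l x c ∧ walkLen w l ≤ β) := by
  obtain _ | ⟨⟨x₀⟩⟩ := isEmpty_or_nonempty V
  · exact ⟨0, isEmptyElim, isEmptyElim, by rw [Nat.cast_zero]; positivity, isEmptyElim,
      isEmptyElim, isEmptyElim, fun x => isEmptyElim x, fun x => isEmptyElim x⟩
  have : Inhabited V := ⟨x₀⟩
  obtain ⟨t, a, b, v, hG⟩ := exists_isGreedyBlocks hw hp₂nd hp₂ch hp₂len hβ.le hε.le (p₁ := p₁)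
  refine ⟨t, fun i => b i, fun i => v i, hG.card_le hw hp₂ch hp₂len hcross hβ hε,
    fun i => hG.end_mem i i.2, fun i => (hG.isDFirst i i.2).mem,
    fun i j hij => hG.idxOf_end_lt hβ.le hε.le hij j.2, ?_, ?_⟩
  · intro x bf hx hbf
    obtain ⟨i, hi, hxb, hmin, hvbf, hxv⟩ :=
      hG.exists_covering_block hw hp₂ch hp₂len hβ.le hε.le hx hbf
    exact ⟨⟨i, hi⟩, hxb, fun j hj => hmin j j.2 hj, hvbf, hxv⟩
  · rintro x hx hbx ⟨l, c, hc, hl, hlβ⟩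
    exact hG.not_reachWithin x hx (fun i hi => hbx ⟨i, hi⟩) c hc ⟨l, hl, hlβ⟩

/-- There are sequences `b₁ <_{P₂} … <_{P₂} b_t` and `v₁, …, v_t` with
`t ≤ 1/ε + 1` such that (1) every `b` on `P₂` with `dfirst(b,P₁,β)` defined has a
nonempty set `{i : b ≤_{P₂} b_i}` whose `≤_{P₁}`-least associated `v_i` is at most
`dfirst(b,P₁,β)` on `P₁` and is reachable from `b` by a walk of length at most
`(1+ε)β`; and (2) no vertex of `P₂` strictly after `b_t` reaches `P₁` within `β`. -/
theorem stmt_9 {V : Type*} [Fintype V] [DecidableEq V] (E : V → V → Prop)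
    (w : V → V → ℝ) (hw : ∀ x y, 0 ≤ w x y)
    (p₂ p₁ : List V) (hp₂nd : p₂.Nodup) (hp₂ch : p₂.Chain' E)
    (hp₂len : walkLen w p₂ = 0) (hp₁nd : p₁.Nodup)
    (hdisj : ∀ x ∈ p₁, x ∉ p₂)
    (hnoout : ∀ x ∈ p₁, ∀ y, ¬ E x y)
    (hhead : ∀ x y, E x y → y ∈ p₂ → ∃ i, p₂[i]? = some x ∧ p₂[i+1]? = some y)
    (hcross : ∀ (lw lw' : List V) (b q b' q' : V),
      b ∈ p₂ → q ∈ p₁ → b' ∈ p₂ → q' ∈ p₁ →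
      IsWalk E lw b q → IsWalk E lw' b' q' →
      p₂.idxOf b' < p₂.idxOf b → p₁.idxOf q' < p₁.idxOf q →
      ∃ x, x ∈ lw ∧ x ∈ lw')
    (β ε : ℝ) (hβ : 0 < β) (hε : 0 < ε) :
    ∃ (t : ℕ) (b v : Fin t → V), (t : ℝ) ≤ 1 / ε + 1 ∧
      (∀ i, b i ∈ p₂) ∧ (∀ i, v i ∈ p₁) ∧
      (∀ i j : Fin t, i < j → p₂.idxOf (b i) < p₂.idxOf (b j)) ∧
      (∀ x bf, x ∈ p₂ → IsDFirst E w x p₁ β bf →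
        ∃ i : Fin t, p₂.idxOf x ≤ p₂.idxOf (b i) ∧
          (∀ j : Fin t, p₂.idxOf x ≤ p₂.idxOf (b j) →
            p₁.idxOf (v i) ≤ p₁.idxOf (v j)) ∧
          p₁.idxOf (v i) ≤ p₁.idxOf bf ∧
          ∃ l, IsWalk E l x (v i) ∧ walkLen w l ≤ (1 + ε) * β) ∧
      (∀ x ∈ p₂, (∀ i : Fin t, p₂.idxOf (b i) < p₂.idxOf x) →
        ¬ ∃ l c, c ∈ p₁ ∧ IsWalk E l x c ∧ walkLen w l ≤ β) :=
  stmt_9_general E w hw p₂ p₁ hp₂nd hp₂ch hp₂len hcross β ε hβ hε
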